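/- Let E be a locally convex Hausdorff topological vector space over ℂ in which every bounded subset is relatively compact in the weak topology σ(E,E′) (i.e. E is semi-reflexive). Then every power bounded continuous linear operator T : E → E is mean ergodic. -/

import Mathlib

/-!
Power boundedness makes the Cesàro means `Mₙ` an equicontinuous family, since `Mₙ x` is a convex
combination of the orbit of `x`; and `Mₙ (x - T x) = (T x - Tⁿ⁺¹ x) / n → 0` because the orbit is
bounded, so `Mₙ → 0` on the closure of `range (1 - T)`. The means `Mₙ x` lie in the convex hull
of the orbit, which is bounded by local convexity and hence weakly relatively compact by
semi-reflexivity, so they have a weak cluster point `y`. Then `T y = y`, and `x - y` lies in the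
weak closure of the subspace `range (1 - T)`, which by Mazur's theorem is its closure. Hence
`Mₙ x = y + Mₙ (x - y) → y`, and the pointwise limit of the equicontinuous family `Mₙ` is a
continuous linear map.
-/

open Filter Topology

/-- The `n`-th Cesàro mean of `T` applied to `x`: `(1/n) ∑_{m=1}^{n} Tᵐ x`. -/
noncomputable def cesaroMean {E : Type*} [AddCommGroup E] [Module ℂ E] [TopologicalSpace E]
    (T : E →L[ℂ] E) (n : ℕ) (x : E) : E :=
  (n : ℂ)⁻¹ • ∑ m ∈ Finset.Icc 1 n, (T ^ m) x

open Finset Bornology Pointwise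

theorem Filter.HasBasis.equicontinuousAt_zero_iff {ι κ G M F : Type*} [TopologicalSpace G]
    [AddGroup G] [UniformSpace M] [AddGroup M] [IsUniformAddGroup M] [FunLike F G M]
    [AddMonoidHomClass F G M] {p : κ → Prop} {s : κ → Set M} (hM : (𝓝 (0 : M)).HasBasis p s)
    {f : ι → F} :
    EquicontinuousAt (fun i => ⇑(f i)) 0 ↔ ∀ k, p k → ∀ᶠ x in 𝓝 0, ∀ i, f i x ∈ s k := by
  simp [hM.uniformity_of_nhds_zero.equicontinuousAt_iff_right]

theorem EquicontinuousAt.isVonNBounded_range_apply {𝕜 ι E F 𝓕 : Type*} [NormedField 𝕜]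
    [AddCommGroup E] [Module 𝕜 E] [TopologicalSpace E] [ContinuousSMul 𝕜 E]
    [AddCommGroup F] [Module 𝕜 F] [UniformSpace F] [IsUniformAddGroup F]
    [FunLike 𝓕 E F] [LinearMapClass 𝓕 𝕜 E F] {f : ι → 𝓕}
    (hf : EquicontinuousAt (fun i => ⇑(f i)) 0) (x : E) :
    IsVonNBounded 𝕜 (Set.range fun i => f i x) := by
  intro U hU
  have hV := (𝓝 (0 : F)).basis_sets.equicontinuousAt_zero_iff.mp hf U hU
  refine (isVonNBounded_singleton x hV).eventually.mono fun c hc => ?_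
  rintro _ ⟨i, rfl⟩
  obtain ⟨v, hv, rfl⟩ := hc rfl
  exact ⟨f i v, hv i, (map_smul (f i) c v).symm⟩

theorem Bornology.IsVonNBounded.convexHull {𝕜 E : Type*} [NormedField 𝕜] [AddCommGroup E]
    [Module 𝕜 E] [Module ℝ E] [SMulCommClass 𝕜 ℝ E] [TopologicalSpace E]
    [LocallyConvexSpace ℝ E] {s : Set E} (hs : IsVonNBounded 𝕜 s) :
    IsVonNBounded 𝕜 (convexHull ℝ s) := by
  intro U hU
  obtain ⟨N, ⟨hN, hNconv⟩, hNU⟩ := (LocallyConvexSpace.convex_basis_zero ℝ E).mem_iff.mp hU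
  refine (hs hN).eventually.mono fun c hc => ?_
  have hcN : Convex ℝ (c • N) := hNconv.linear_image (DistribSMul.toLinearMap ℝ E c)
  exact (convexHull_min hc hcN).trans (Set.smul_set_mono hNU)

instance RCLike.separatingDual_of_locallyConvexSpace {𝕜 E : Type*} [RCLike 𝕜] [AddCommGroup E]
    [Module 𝕜 E] [Module ℝ E] [IsScalarTower ℝ 𝕜 E] [TopologicalSpace E]
    [IsTopologicalAddGroup E] [ContinuousSMul 𝕜 E] [LocallyConvexSpace ℝ E] [T1Space E] :
    SeparatingDual 𝕜 E :=
  ⟨fun _ hx => RCLike.geometric_hahn_banach_point_point hx |>.imp fun f hf hf' => by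
    simp [hf'] at hf⟩

theorem Equicontinuous.exists_continuousLinearMap_tendsto {𝕜 ι E F : Type*} [Semiring 𝕜]
    [AddCommMonoid E] [Module 𝕜 E] [TopologicalSpace E] [AddCommMonoid F] [Module 𝕜 F]
    [UniformSpace F] [T2Space F] [ContinuousAdd F] [ContinuousConstSMul 𝕜 F]
    {l : Filter ι} [l.NeBot] {f : ι → E →L[𝕜] F} (hf : Equicontinuous fun i => ⇑(f i))
    (h : ∀ x, ∃ y, Tendsto (fun i => f i x) l (𝓝 y)) :
    ∃ P : E →L[𝕜] F, ∀ x, Tendsto (fun i => f i x) l (𝓝 (P x)) := by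
  choose g hg using h
  have hlim : Tendsto (fun i x => f i x) l (𝓝 g) := tendsto_pi_nhds.mpr hg
  exact ⟨⟨linearMapOfTendsto g (fun i => (f i : E →ₗ[𝕜] F)) hlim,
    hlim.continuous_of_equicontinuous hf⟩, hg⟩

theorem MapClusterPt.eq_of_tendsto {X α : Type*} [TopologicalSpace X] [T2Space X]
    {l : Filter α} {u : α → X} {x y : X} (hx : MapClusterPt x l u) (hy : Tendsto u l (𝓝 y)) :
    x = y :=
  eq_of_nhds_neBot (ClusterPt.mono hx hy)

theorem MapClusterPt.mem_closure {X α : Type*} [TopologicalSpace X] {l : Filter α} {u : α → X}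
    {x : X} {s : Set X} (hx : MapClusterPt x l u) (hs : ∀ᶠ a in l, u a ∈ s) : x ∈ closure s :=
  mem_closure_iff_clusterPt.mpr (ClusterPt.mono hx (tendsto_principal.mpr hs))

section Cesaro

variable {E : Type*} [AddCommGroup E] [Module ℂ E] [TopologicalSpace E] [IsTopologicalAddGroup E]
  [ContinuousConstSMul ℂ E] (T : E →L[ℂ] E)

noncomputable def cesaroCLM (n : ℕ) : E →L[ℂ] E :=
  (n : ℂ)⁻¹ • ∑ m ∈ Icc 1 n, T ^ m

theorem coe_cesaroCLM (n : ℕ) : ⇑(cesaroCLM T n) = cesaroMean T n := by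
  ext x
  simp [cesaroCLM, cesaroMean]

theorem cesaroCLM_eq_sum_range (n : ℕ) :
    cesaroCLM T n = (n : ℂ)⁻¹ • ∑ k ∈ range n, T ^ (k + 1) := by
  rw [cesaroCLM, range_eq_Ico, sum_Ico_add' (T ^ ·) 0 n 1]
  rfl

theorem commute_cesaroCLM (n : ℕ) : Commute T (cesaroCLM T n) :=
  (Commute.sum_right _ _ _ fun m _ => Commute.self_pow T m).smul_right _

theorem cesaroCLM_mul_one_sub (n : ℕ) :
    cesaroCLM T n * (1 - T) = (n : ℂ)⁻¹ • (T - T ^ (n + 1)) := by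
  rw [cesaroCLM_eq_sum_range, smul_mul_assoc]
  simp_rw [pow_succ']
  rw [← mul_sum, mul_assoc, geom_sum_mul_neg, mul_sub, mul_one]

theorem exists_one_sub_cesaroCLM_eq_mul {n : ℕ} (hn : n ≠ 0) :
    ∃ S : E →L[ℂ] E, 1 - cesaroCLM T n = (1 - T) * S := by
  refine ⟨(n : ℂ)⁻¹ • ∑ k ∈ range n, ∑ i ∈ range (k + 1), T ^ i, ?_⟩
  rw [mul_smul_comm, mul_sum]
  simp_rw [mul_neg_geom_sum]
  rw [sum_sub_distrib, sum_const, card_range, smul_sub, cesaroCLM_eq_sum_range,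
    ← Nat.cast_smul_eq_nsmul ℂ, inv_smul_smul₀ (Nat.cast_ne_zero.mpr hn)]

theorem cesaroCLM_apply_of_apply_eq {n : ℕ} (hn : n ≠ 0) {y : E} (hy : T y = y) :
    cesaroCLM T n y = y := by
  have hpow (m : ℕ) : (T ^ m) y = y := by
    rw [FunLike.coe_pow_eq_iterate]
    exact Function.IsFixedPt.iterate hy m
  simp only [cesaroCLM_eq_sum_range, FunLike.coe_smul, Pi.smul_apply, FunLike.coe_sum,
    Finset.sum_apply, hpow]
  rw [sum_const, card_range, ← Nat.cast_smul_eq_nsmul ℂ, inv_smul_smul₀ (Nat.cast_ne_zero.mpr hn)]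

theorem cesaroMean_mem_convexHull [Module ℝ E] {n : ℕ} (hn : n ≠ 0) (x : E) :
    cesaroMean T n x ∈ convexHull ℝ (Set.range fun m => (T ^ (m + 1)) x) := by
  have hcm : cesaroMean T n x =
      (range n).centerMass (fun _ => (1 : ℝ)) fun k => (T ^ (k + 1)) x := by
    rw [← coe_cesaroCLM, cesaroCLM_eq_sum_range, centerMass]
    simp [inv_natCast_smul_eq ℝ ℂ]
  rw [hcm]
  exact centerMass_mem_convexHull _ (fun _ _ => zero_le_one) (by simpa using Nat.pos_of_ne_zero hn)
    fun k _ => ⟨k, rfl⟩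

end Cesaro

def IsPowerBounded {E : Type*} [AddCommGroup E] [Module ℂ E] [UniformSpace E]
    (T : E →L[ℂ] E) : Prop :=
  Equicontinuous fun m : ℕ => ⇑(T ^ (m + 1))

section PowerBounded

variable {E : Type*} [AddCommGroup E] [Module ℂ E] [UniformSpace E] [IsUniformAddGroup E]
  [ContinuousSMul ℂ E] {T : E →L[ℂ] E} {x y : E}

theorem IsPowerBounded.tendsto_cesaroCLM_apply_one_sub (hT : IsPowerBounded T) (x : E) :
    Tendsto (fun n : ℕ => cesaroCLM T (n + 1) ((1 - T) x)) atTop (𝓝 0) := by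
  have horbit := (hT 0).isVonNBounded_range_apply (𝕜 := ℂ) x
  have hsmul := (horbit.sub horbit).smul_tendsto_zero (x := fun n => T x - (T ^ (n + 2)) x)
    (Eventually.of_forall fun n => Set.sub_mem_sub ⟨0, by simp⟩ ⟨n + 1, rfl⟩)
    ((tendsto_inv_atTop_nhds_zero_nat (𝕜 := ℂ)).comp (tendsto_add_atTop_nat 1))
  refine hsmul.congr fun n => ?_
  rw [← mul_apply_eq_comp, cesaroCLM_mul_one_sub]
  simp

variable [Module ℝ E] [LocallyConvexSpace ℝ E]

theorem IsPowerBounded.equicontinuous_cesaroCLM (hT : IsPowerBounded T) :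
    Equicontinuous fun n : ℕ => ⇑(cesaroCLM T (n + 1)) := by
  refine (uniformEquicontinuous_of_equicontinuousAt_zero _ ?_).equicontinuous
  have hbasis := LocallyConvexSpace.convex_basis_zero ℝ E
  refine hbasis.equicontinuousAt_zero_iff.mpr ?_
  rintro U ⟨hU, hUconv⟩
  filter_upwards [hbasis.equicontinuousAt_zero_iff.mp (hT 0) U ⟨hU, hUconv⟩] with v hv n
  rw [coe_cesaroCLM]
  exact convexHull_min (Set.range_subset_iff.mpr hv) hUconv
    (cesaroMean_mem_convexHull T n.succ_ne_zero v)

theorem IsPowerBounded.tendsto_cesaroCLM_of_mem_closure_range (hT : IsPowerBounded T) {z : E}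
    (hz : z ∈ closure (Set.range ⇑(1 - T))) :
    Tendsto (fun n : ℕ => cesaroCLM T (n + 1) z) atTop (𝓝 0) :=
  (hT.equicontinuous_cesaroCLM z).tendsto_of_mem_closure tendsto_const_nhds
    (by rintro _ ⟨x, rfl⟩; exact hT.tendsto_cesaroCLM_apply_one_sub x) hz

variable [IsScalarTower ℝ ℂ E]

theorem IsPowerBounded.exists_mapClusterPt_toWeakSpace_cesaroCLM (hT : IsPowerBounded T)
    (hsemireflexive : ∀ s : Set E, IsVonNBounded ℂ s →
      IsCompact (closure (toWeakSpace ℂ E '' s))) (x : E) :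
    ∃ y, MapClusterPt (toWeakSpace ℂ E y) atTop
      fun n : ℕ => toWeakSpace ℂ E (cesaroCLM T (n + 1) x) := by
  have hK := hsemireflexive _ ((hT 0).isVonNBounded_range_apply (𝕜 := ℂ) x).convexHull
  obtain ⟨y, -, hy⟩ := hK.exists_mapClusterPt (f := atTop)
    (u := fun n : ℕ => toWeakSpace ℂ E (cesaroCLM T (n + 1) x)) <| tendsto_principal.mpr <|
    Eventually.of_forall fun (n : ℕ) => subset_closure <| Set.mem_image_of_mem _ <| by
      simpa only [coe_cesaroCLM] using cesaroMean_mem_convexHull T n.succ_ne_zero x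
  exact ⟨(toWeakSpace ℂ E).symm y, by rwa [LinearEquiv.apply_symm_apply]⟩

theorem sub_mem_closure_range_of_mapClusterPt
    (hy : MapClusterPt (toWeakSpace ℂ E y) atTop
      fun n : ℕ => toWeakSpace ℂ E (cesaroCLM T (n + 1) x)) :
    x - y ∈ closure (Set.range ⇑(1 - T)) := by
  set W := toWeakSpace ℂ E
  have hconv : Convex ℝ (Set.range ⇑(1 - T)) := by
    have h := convex_univ.linear_image (((1 - T : E →L[ℂ] E) : E →ₗ[ℂ] E).restrictScalars ℝ)
    rwa [Set.image_univ] at h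
  have hmem (n : ℕ) : W x - W (cesaroCLM T (n + 1) x) ∈ W '' Set.range ⇑(1 - T) := by
    obtain ⟨S, hS⟩ := exists_one_sub_cesaroCLM_eq_mul T n.succ_ne_zero
    refine ⟨(1 - T) (S x), ⟨S x, rfl⟩, ?_⟩
    rw [← mul_apply_eq_comp, ← hS, ← map_sub]
    simp
  have hclu : MapClusterPt (W x - W y) atTop fun n : ℕ => W x - W (cesaroCLM T (n + 1) x) :=
    hy.continuousAt_comp (continuous_const.sub continuous_id).continuousAt
  have hxy := hclu.mem_closure (Eventually.of_forall hmem)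
  rw [← hconv.toWeakSpace_closure ℂ, ← map_sub] at hxy
  exact W.injective.mem_set_image.mp hxy

variable [T2Space E]

theorem IsPowerBounded.apply_eq_of_mapClusterPt (hT : IsPowerBounded T)
    (hy : MapClusterPt (toWeakSpace ℂ E y) atTop
      fun n : ℕ => toWeakSpace ℂ E (cesaroCLM T (n + 1) x)) :
    T y = y := by
  set W := toWeakSpace ℂ E
  have htend : Tendsto (WeakSpace.map (1 - T) ∘ fun n : ℕ => W (cesaroCLM T (n + 1) x)) atTop
      (𝓝 0) := by
    have h := ((toWeakSpaceCLM ℂ E).continuous.tendsto 0).comp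
      (hT.tendsto_cesaroCLM_apply_one_sub x)
    rw [map_zero] at h
    refine h.congr fun n => ?_
    change W (cesaroCLM T (n + 1) ((1 - T) x)) = W ((1 - T) (cesaroCLM T (n + 1) x))
    rw [← mul_apply_eq_comp, ← mul_apply_eq_comp,
      ((Commute.one_left _).sub_left (commute_cesaroCLM T _)).eq]
  have h0 : W ((1 - T) y) = 0 :=
    (hy.continuousAt_comp (WeakSpace.map (1 - T)).continuous.continuousAt).eq_of_tendsto htend
  rw [map_eq_zero_iff W W.injective, sub_apply, one_apply_eq_self, sub_eq_zero] at h0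
  exact h0.symm

theorem IsPowerBounded.tendsto_cesaroCLM_of_mapClusterPt (hT : IsPowerBounded T)
    (hy : MapClusterPt (toWeakSpace ℂ E y) atTop
      fun n : ℕ => toWeakSpace ℂ E (cesaroCLM T (n + 1) x)) :
    Tendsto (fun n : ℕ => cesaroCLM T (n + 1) x) atTop (𝓝 y) := by
  have hdecomp (n : ℕ) : cesaroCLM T (n + 1) x = y + cesaroCLM T (n + 1) (x - y) := by
    rw [map_sub, cesaroCLM_apply_of_apply_eq T n.succ_ne_zero (hT.apply_eq_of_mapClusterPt hy)]
    abel
  have h := (tendsto_const_nhds (x := y)).add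
    (hT.tendsto_cesaroCLM_of_mem_closure_range (sub_mem_closure_range_of_mapClusterPt hy))
  rw [add_zero] at h
  exact h.congr fun n => (hdecomp n).symm

end PowerBounded

/-- Every power bounded operator on a semi-reflexive locally convex Hausdorff space is
mean ergodic. -/
theorem stmt3 {E : Type*} [AddCommGroup E] [Module ℂ E] [Module ℝ E] [IsScalarTower ℝ ℂ E]
    [UniformSpace E] [IsUniformAddGroup E] [ContinuousSMul ℂ E]
    [LocallyConvexSpace ℝ E] [T2Space E]
    -- `E` is semi-reflexive: every bounded subset of `E` is relatively compact in the weak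
    -- topology `σ(E,E′)`
    (hsemireflexive : ∀ s : Set E, Bornology.IsVonNBounded ℂ s →
      IsCompact (closure (toWeakSpace ℂ E '' s)))
    (T : E →L[ℂ] E)
    -- `T` is power bounded: the family `{Tᵐ : m ≥ 1}` is equicontinuous
    (hpow : Equicontinuous fun m : ℕ => ⇑(T ^ (m + 1))) :
    -- `T` is mean ergodic
    ∃ P : E →L[ℂ] E, ∀ x : E,
      Tendsto (fun n : ℕ => cesaroMean T (n + 1) x) atTop (𝓝 (P x)) := by
  have hT : IsPowerBounded T := hpow
  obtain ⟨P, hP⟩ := hT.equicontinuous_cesaroCLM.exists_continuousLinearMap_tendsto fun x =>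
    let ⟨y, hy⟩ := hT.exists_mapClusterPt_toWeakSpace_cesaroCLM hsemireflexive x
    ⟨y, hT.tendsto_cesaroCLM_of_mapClusterPt hy⟩
  exact ⟨P, by simpa only [coe_cesaroCLM] using hP⟩
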